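/- arXiv:2301.04403 — 2 statements merged into one kernel-verified Lean document; each statement's English description precedes it below -/
import Mathlib

section
/- Let r ≥ 1. There exists a constant C = C(r) > 0 such that for all f, g ∈ H^r(𝕋): ‖ |∂ₓ|^{−2} [ (|∂ₓ| g) · (|∂ₓ| f) ] ‖_r ≤ C ‖f‖_r ‖g‖_r. -/
open MeasureTheory Complex

noncomputable section

local notation "𝕋" => AddCircle (2 * Real.pi)

instance : Fact (0 < 2 * Real.pi) := ⟨by positivity⟩

def fc (f : 𝕋 → ℂ) (k : ℤ) : ℂ := fourierCoeff f k

def sNormSq (α : ℝ) (f : 𝕋 → ℂ) : ℝ :=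
  ∑' k : ℤ, (1 + (k : ℝ) ^ 2) ^ α * ‖fc f k‖ ^ 2

def sNorm (α : ℝ) (f : 𝕋 → ℂ) : ℝ := Real.sqrt (sNormSq α f)

def MemH (α : ℝ) (f : 𝕋 → ℂ) : Prop :=
  MemLp f 2 volume ∧ Summable fun k : ℤ => (1 + (k : ℝ) ^ 2) ^ α * ‖fc f k‖ ^ 2

def mulOp (m : ℤ → ℂ) (f : 𝕋 → ℂ) : 𝕋 → ℂ :=
  fun x => ∑' k : ℤ, m k * fc f k * fourier k x

def cconj (f : 𝕋 → ℂ) : 𝕋 → ℂ := fun x => (starRingEnd ℂ) (f x)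

/-- Bessel potential `J^α`, with symbol `(1+k²)^{α/2}`. -/
def Jop (α : ℝ) : (𝕋 → ℂ) → (𝕋 → ℂ) :=
  mulOp fun k => (((1 + (k : ℝ) ^ 2) ^ (α / 2) : ℝ) : ℂ)

/-- The operator `|∂ₓ|^α`, with symbol `|k|^α` for `k ≠ 0`, annihilating the zero mode. -/
def absD (α : ℝ) : (𝕋 → ℂ) → (𝕋 → ℂ) :=
  mulOp fun k => if k = 0 then 0 else ((|(k : ℝ)| ^ α : ℝ) : ℂ)

/-- `∂ₓ^m` for `m : ℤ`: symbol `(ik)^m` for `k ≠ 0`, annihilating the zero mode. -/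
def Dpow (m : ℤ) : (𝕋 → ℂ) → (𝕋 → ℂ) :=
  mulOp fun k => if k = 0 then 0 else (Complex.I * (k : ℂ)) ^ m

/-- Symbol of `⟨∂ₓ²⟩`: `√(k² + k⁴)`. -/
def brSym (k : ℤ) : ℝ := Real.sqrt ((k : ℝ) ^ 2 + (k : ℝ) ^ 4)

/-- `e^{it∂ₓ²}`, with symbol `e^{-itk²}`. -/
def eitDxx (t : ℝ) : (𝕋 → ℂ) → (𝕋 → ℂ) :=
  mulOp fun k => Complex.exp (-(Complex.I * t * (k : ℂ) ^ 2))

/-- `e^{it∂ₓ²} - 1`, with symbol `e^{-itk²} - 1`. -/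
def eitDxxm1 (t : ℝ) : (𝕋 → ℂ) → (𝕋 → ℂ) :=
  mulOp fun k => Complex.exp (-(Complex.I * t * (k : ℂ) ^ 2)) - 1

/-- `⟨∂ₓ²⟩⁻¹`, symbol `(k²+k⁴)^{-1/2}` for `k ≠ 0`, `0` at `k = 0`. -/
def brInv : (𝕋 → ℂ) → (𝕋 → ℂ) :=
  mulOp fun k => if k = 0 then 0 else (((brSym k)⁻¹ : ℝ) : ℂ)

/-- Symbol of `A = ⟨∂ₓ²⟩ + ∂ₓ²`: `√(k²+k⁴) - k²`. -/
def Asym (k : ℤ) : ℝ := brSym k - (k : ℝ) ^ 2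

/-- `A = ⟨∂ₓ²⟩ + ∂ₓ²`. -/
def Aop : (𝕋 → ℂ) → (𝕋 → ℂ) := mulOp fun k => ((Asym k : ℝ) : ℂ)

/-- `e^{itA} - 1`. -/
def eitAm1 (t : ℝ) : (𝕋 → ℂ) → (𝕋 → ℂ) :=
  mulOp fun k => Complex.exp (Complex.I * t * ((Asym k : ℝ) : ℂ)) - 1

/-- Symbol of `B = ⟨∂ₓ²⟩⁻¹ ∂ₓ²`: `-k²/√(k²+k⁴)` for `k ≠ 0`, `0` at `k = 0`. -/
def Bsym (k : ℤ) : ℝ := if k = 0 then 0 else -(k : ℝ) ^ 2 / brSym k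

/-- `B = ⟨∂ₓ²⟩⁻¹ ∂ₓ²`. -/
def Bop : (𝕋 → ℂ) → (𝕋 → ℂ) := mulOp fun k => ((Bsym k : ℝ) : ℂ)

/-- `e^{it⟨∂ₓ²⟩}`, with symbol `e^{it√(k²+k⁴)}`. -/
def eitBr (t : ℝ) : (𝕋 → ℂ) → (𝕋 → ℂ) :=
  mulOp fun k => Complex.exp (Complex.I * t * ((brSym k : ℝ) : ℂ))

/-- `e^{it⟨∂ₓ²⟩} - 1`. -/
def eitBrm1 (t : ℝ) : (𝕋 → ℂ) → (𝕋 → ℂ) :=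
  mulOp fun k => Complex.exp (Complex.I * t * ((brSym k : ℝ) : ℂ)) - 1

/-- `B^τ = B e^{iτ⟨∂ₓ²⟩}`, as a single multiplier. -/
def Btau (τ : ℝ) : (𝕋 → ℂ) → (𝕋 → ℂ) :=
  mulOp fun k => ((Bsym k : ℝ) : ℂ) * Complex.exp (Complex.I * τ * ((brSym k : ℝ) : ℂ))

/-- `ψ₁(y) = ∫₀¹ e^{ys} ds`. -/
def psi1 (y : ℂ) : ℂ := ∫ s in (0 : ℝ)..1, Complex.exp (y * s)

/-- `ψ₁(it∂ₓ²)`, with symbol `ψ₁(-itk²)`. -/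
def psiOp (t : ℝ) : (𝕋 → ℂ) → (𝕋 → ℂ) :=
  mulOp fun k => psi1 (-(Complex.I * t * (k : ℂ) ^ 2))

/-- Sobolev norm (squared) of a Fourier coefficient sequence. -/
def seqNormSq (α : ℝ) (c : ℤ → ℂ) : ℝ :=
  ∑' k : ℤ, (1 + (k : ℝ) ^ 2) ^ α * ‖c k‖ ^ 2

def seqNorm (α : ℝ) (c : ℤ → ℂ) : ℝ := Real.sqrt (seqNormSq α c)

/-- Fourier coefficients of `P₁^τ(f)`. -/
def P1coef (τ : ℝ) (f : 𝕋 → ℂ) (k : ℤ) : ℂ :=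
  if k = 0 then 0 else
    ∑' k₁ : ℤ, ((k₁ : ℂ) ^ 2 / (k : ℂ) ^ 2) *
      (∫ s in (0 : ℝ)..τ,
        (Complex.exp (-(2 * Complex.I * s * (((k - k₁ : ℤ)) : ℂ) ^ 2)) - 1) *
        (Complex.exp (-(2 * Complex.I * s * (k : ℂ) * (k₁ : ℂ))) - 1)) *
      fc (cconj f) k₁ * fc (cconj f) (k - k₁)

/-- Fourier coefficients of `P₂^τ(f)`. -/
def P2coef (τ : ℝ) (f : 𝕋 → ℂ) (k : ℤ) : ℂ :=
  if k = 0 then 0 else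
    ∑' k₁ : ℤ, ((2 * (k₁ : ℂ) * (((k - k₁ : ℤ)) : ℂ)) / (k : ℂ) ^ 2) *
      (∫ s in (0 : ℝ)..τ,
        (Complex.exp (-(2 * Complex.I * s * (k : ℂ) ^ 2)) - 1) *
        (Complex.exp (2 * Complex.I * s * (k₁ : ℂ) * (((k - k₁ : ℤ)) : ℂ)) - 1)) *
      fc (cconj f) k₁ * fc (cconj f) (k - k₁)

def L1op (τ : ℝ) (f : 𝕋 → ℂ) : 𝕋 → ℂ :=
  (-(Complex.I / 2)) • Dpow (-2) ((eitDxx (2 * τ) (Dpow (-2) (cconj f))) * (Dpow 2 (cconj f)))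
    + (Complex.I / 2) • Dpow (-2) ((Dpow 2 (cconj f)) * (Dpow (-2) (cconj f)))

def L2op (τ : ℝ) (f : 𝕋 → ℂ) : 𝕋 → ℂ :=
  (-(Complex.I / 2)) • eitDxx τ (Dpow (-3) ((eitDxx τ (Dpow 1 (cconj f))) * (eitDxx (-τ) (cconj f))))
    + (Complex.I / 2) • Dpow (-3) ((Dpow 1 (cconj f)) * (cconj f))
    - (τ : ℂ) • Dpow (-2) ((Dpow 2 (cconj f)) * (cconj f))

def L3op (τ : ℝ) (f : 𝕋 → ℂ) : 𝕋 → ℂ :=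
  (-Complex.I) • Dpow (-4) (eitDxxm1 (2 * τ) ((Dpow 1 (cconj f)) * (Dpow 1 (cconj f))))

def L4op (τ : ℝ) (f : 𝕋 → ℂ) : 𝕋 → ℂ :=
  Complex.I • Dpow (-2) (eitDxx (-τ) ((eitDxx τ (cconj f)) * (eitDxx τ (cconj f))))
    - Complex.I • Dpow (-2) ((cconj f) * (cconj f))
    - ((2 * τ : ℝ) : ℂ) • Dpow (-2) ((Dpow 1 (cconj f)) * (Dpow 1 (cconj f)))

def I1op (τ : ℝ) (f : 𝕋 → ℂ) : 𝕋 → ℂ :=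
  (Complex.I / 2) • ((Dpow (-1) f) * (Dpow (-1) f)
    - eitDxx τ ((eitDxx (-τ) (Dpow (-1) f)) * (eitDxx (-τ) (Dpow (-1) f))))

def I2op (τ : ℝ) (f : 𝕋 → ℂ) : 𝕋 → ℂ :=
  (-(Complex.I / 2)) • eitDxx τ (Dpow (-1) ((eitDxx (-τ) f) * (eitDxx τ (Dpow (-1) (cconj f)))))
    + (Complex.I / 2) • Dpow (-1) (f * (Dpow (-1) (cconj f)))
    + fun _ => ((τ * sNormSq 0 f : ℝ) : ℂ)

/-- The first-order low regularity exponential integrator `Ψ₁^τ` at time level `t_n`. -/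
def Psi1 (τ a b tn : ℝ) (f : 𝕋 → ℂ) : 𝕋 → ℂ :=
  eitBr τ f
    - (Complex.I / 4) • Btau τ ((2 : ℂ) • L1op τ f + (2 : ℂ) • L2op τ f + L3op τ f
        + L4op τ f + I1op τ f + (2 : ℂ) • I2op τ f)
    - (Complex.I * τ * ((a * tn + b : ℝ) : ℂ)) • Btau τ (f + psiOp (2 * τ) (cconj f))

/-- The additional-regularity exponent `p(r)` (with parameter `ε` standing for `+`). -/
def preg (ε r : ℝ) : ℝ :=
  if r = 1 then 1
  else if r ≤ 7/6 then 3 - 2*r + ε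
  else if r ≤ 17/12 then 2/3
  else if r ≤ 3/2 then 7/2 - 2*r + ε
  else if r < 5/2 then 5/4 - r/2
  else if r = 5/2 then ε
  else 0

/-- The additional-regularity exponent `q(r)` for `P₂`. -/
def qreg (r : ℝ) : ℝ := if r ≤ 5/2 then 5/4 - r/2 else 0

/-! On the Fourier side the operator has coefficients `|k|⁻² ∑ₚ |p| ĝₚ |k - p| f̂ₖ₋ₚ`.
Since `|k| ≤ |p| + |k - p|` and `r ≥ 1`, the weight `⟨k⟩ʳ |p| |k - p|` is at most
`C |k| ⟨p⟩ʳ ⟨k - p⟩ʳ`, so by Cauchy–Schwarz the `k`-th coefficient weighted by `⟨k⟩ʳ` is at most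
`C ‖f‖ᵣ ‖g‖ᵣ / |k|`, which is square-summable.

`mulOp` is a `tsum`, so it is `0` whenever the Fourier series of `|∂ₓ| f` or `|∂ₓ| g` fails to
converge absolutely; in that case the left-hand side vanishes. -/

lemma norm_fourier_apply {T : ℝ} (n : ℤ) (x : AddCircle T) : ‖fourier n x‖ = 1 :=
  Circle.norm_coe _

def seqConv (c d : ℤ → ℂ) (j : ℤ) : ℂ := ∑' p, c p * d (j - p)

def convIndexEquiv : ℤ × ℤ ≃ ℤ × ℤ where
  toFun q := (q.2, q.1 - q.2)
  invFun q := (q.1 + q.2, q.1)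
  left_inv := by rintro ⟨j, p⟩; simp
  right_inv := by rintro ⟨a, b⟩; simp

lemma summable_norm_mul_norm_sub {E F : Type*} [SeminormedAddGroup E] [SeminormedAddGroup F]
    {f : ℤ → E} {g : ℤ → F} (hf : Summable (‖f ·‖)) (hg : Summable (‖g ·‖)) :
    Summable fun q : ℤ × ℤ => ‖f q.2‖ * ‖g (q.1 - q.2)‖ :=
  (hf.mul_of_nonneg hg (fun _ => norm_nonneg _) fun _ => norm_nonneg _).comp_injective
    convIndexEquiv.injective

lemma tsum_mul_tsum_eq_tsum_tsum_sub {R : Type*} [NormedRing R] [CompleteSpace R] {f g : ℤ → R}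
    (hf : Summable (‖f ·‖)) (hg : Summable (‖g ·‖)) :
    (∑' k, f k) * (∑' k, g k) = ∑' j, ∑' p, f p * g (j - p) := by
  have hsum := (summable_mul_of_summable_norm hf hg).comp_injective convIndexEquiv.injective
  rw [tsum_mul_tsum_of_summable_norm hf hg, ← convIndexEquiv.tsum_eq (fun q => f q.1 * g q.2)]
  exact hsum.tsum_prod

lemma summable_norm_seqConv {c d : ℤ → ℂ} (hc : Summable (‖c ·‖)) (hd : Summable (‖d ·‖)) :
    Summable fun j => ‖seqConv c d j‖ := by
  have hprod := summable_norm_mul_norm_sub hc hd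
  refine .of_nonneg_of_le (fun _ => norm_nonneg _) (fun j => ?_)
    ((summable_prod_of_nonneg fun _ => by positivity).1 hprod).2
  refine (norm_tsum_le_tsum_norm ?_).trans_eq (tsum_congr fun p => norm_mul _ _)
  simpa only [norm_mul] using hprod.prod_factor j

lemma tsum_fourier_mul_tsum_fourier {c d : ℤ → ℂ} (hc : Summable (‖c ·‖))
    (hd : Summable (‖d ·‖)) (x : 𝕋) :
    (∑' k, c k * fourier k x) * (∑' k, d k * fourier k x)
      = ∑' j, seqConv c d j * fourier j x := by
  have hnorm : ∀ e : ℤ → ℂ, (fun k => ‖e k * fourier k x‖) = (‖e ·‖) := fun e =>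
    funext fun k => by rw [norm_mul, norm_fourier_apply, mul_one]
  rw [tsum_mul_tsum_eq_tsum_tsum_sub (by rwa [hnorm]) (by rwa [hnorm])]
  refine tsum_congr fun j => ?_
  rw [seqConv, ← tsum_mul_right]
  refine tsum_congr fun p => ?_
  rw [show j = p + (j - p) by ring, fourier_add, add_sub_cancel_left]
  ring

lemma fc_tsum_fourier {e : ℤ → ℂ} (he : Summable (‖e ·‖)) (j : ℤ) :
    fc (fun x => ∑' k, e k * fourier k x) j = e j := by
  have hint : ∀ k, Integrable (fun x : 𝕋 => fourier (-j) x • (e k * fourier k x))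
      AddCircle.haarAddCircle := fun k =>
    ((fourier (-j)).continuous.smul (continuous_const.mul (fourier k).continuous)
      ).integrable_of_hasCompactSupport (.of_compactSpace _)
  have hnorm : (fun k =>
      ∫ x : 𝕋, ‖fourier (-j) x • (e k * fourier k x)‖ ∂AddCircle.haarAddCircle) = (‖e ·‖) := by
    funext k
    simp only [norm_smul, norm_mul, norm_fourier_apply, one_mul, mul_one]
    simp
  have hterm : ∀ k, ∫ x : 𝕋, fourier (-j) x • (e k * fourier k x) ∂AddCircle.haarAddCircle
      = e k * (Pi.single k 1 : ℤ → ℂ) j := fun k => by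
    rw [← fourierCoeff_fourier (T := 2 * Real.pi), ← fourierCoeff.const_mul]
    rfl
  unfold fc fourierCoeff
  simp_rw [← tsum_const_smul'']
  rw [← integral_tsum_of_summable_integral_norm hint (hnorm ▸ he), tsum_eq_single j]
  · rw [hterm, Pi.single_eq_same, mul_one]
  · intro k hk
    rw [hterm, Pi.single_eq_of_ne' hk, mul_zero]

lemma fc_zero : fc 0 = 0 := by
  funext k
  simp [fc, fourierCoeff]

lemma mulOp_zero (m : ℤ → ℂ) : mulOp m 0 = 0 := by
  funext x
  simp [mulOp, fc_zero]

lemma fc_mulOp {m : ℤ → ℂ} {f : 𝕋 → ℂ} (h : Summable fun k => ‖m k * fc f k‖) :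
    fc (mulOp m f) = fun k => m k * fc f k :=
  funext (fc_tsum_fourier h)

lemma mulOp_eq_zero_of_not_summable {m : ℤ → ℂ} {f : 𝕋 → ℂ}
    (h : ¬Summable fun k => ‖m k * fc f k‖) : mulOp m f = 0 := by
  funext x
  refine tsum_eq_zero_of_not_summable fun hx => h ?_
  simpa only [norm_mul, norm_fourier_apply, mul_one] using summable_norm_iff.mpr hx

lemma sNorm_zero (α : ℝ) : sNorm α 0 = 0 := by
  simp [sNorm, sNormSq, fc_zero]

lemma sNorm_mulOp_le (α : ℝ) (m : ℤ → ℂ) (f : 𝕋 → ℂ) :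
    sNorm α (mulOp m f) ≤ seqNorm α fun k => m k * fc f k := by
  by_cases h : Summable fun k => ‖m k * fc f k‖
  · exact (congrArg (seqNorm α) (fc_mulOp h)).le
  · rw [mulOp_eq_zero_of_not_summable h, sNorm_zero]
    exact Real.sqrt_nonneg _

def absDSymbol (α : ℝ) (k : ℤ) : ℂ := if k = 0 then 0 else ((|(k : ℝ)| ^ α : ℝ) : ℂ)

lemma absD_eq_mulOp (α : ℝ) : absD α = mulOp (absDSymbol α) := rfl

lemma norm_absDSymbol_one (k : ℤ) : ‖absDSymbol 1 k‖ = |(k : ℝ)| := by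
  unfold absDSymbol
  split_ifs with hk <;> simp [hk]

/-- At `k = 0` both sides vanish, the right one because `0⁻¹ = 0`. -/
lemma norm_absDSymbol_neg_two (k : ℤ) : ‖absDSymbol (-2) k‖ = ((k : ℝ) ^ 2)⁻¹ := by
  unfold absDSymbol
  split_ifs with hk
  · simp [hk]
  · rw [Complex.norm_real, Real.norm_of_nonneg (by positivity), Real.rpow_neg (abs_nonneg _),
      Real.rpow_two, sq_abs]

lemma abs_le_sqrt_one_add_sq (y : ℝ) : |y| ≤ √(1 + y ^ 2) :=
  Real.abs_le_sqrt (by linarith)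

lemma one_le_sqrt_one_add_sq (y : ℝ) : 1 ≤ √(1 + y ^ 2) :=
  Real.one_le_sqrt.mpr (by nlinarith)

lemma abs_le_sqrt_one_add_sq_rpow {r : ℝ} (hr : 1 ≤ r) (y : ℝ) : |y| ≤ √(1 + y ^ 2) ^ r :=
  (abs_le_sqrt_one_add_sq y).trans <| by
    simpa using Real.rpow_le_rpow_of_exponent_le (one_le_sqrt_one_add_sq y) hr

lemma sqrt_rpow_sq {t : ℝ} (ht : 0 ≤ t) (r : ℝ) : (√t ^ r) ^ 2 = t ^ r := by
  rw [← Real.rpow_natCast, ← Real.rpow_mul (Real.sqrt_nonneg t), mul_comm,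
    Real.rpow_mul (Real.sqrt_nonneg t), Real.rpow_natCast, Real.sq_sqrt ht]

/-- With `⟨x⟩ = √(1 + x²)`: `⟨x⟩ ≤ √2 |x|` as `|x| ≥ 1`, and `⟨x⟩ ≤ ⟨y⟩ + ⟨z⟩ ≤ 2 ⟨y⟩ ⟨z⟩`;
the first bound takes one power of `⟨x⟩`, the second the remaining `r - 1`. -/
lemma sqrt_one_add_sq_rpow_mul_le {r x y z : ℝ} (hr : 1 ≤ r) (hx : 1 ≤ |x|) (hxyz : y + z = x) :
    √(1 + x ^ 2) ^ r * (|y| * |z|)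
      ≤ √2 * 2 ^ (r - 1) * |x| * (√(1 + y ^ 2) ^ r * √(1 + z ^ 2) ^ r) := by
  set X := √(1 + x ^ 2)
  set Y := √(1 + y ^ 2)
  set Z := √(1 + z ^ 2)
  have hY : 1 ≤ Y := one_le_sqrt_one_add_sq y
  have hZ : 1 ≤ Z := one_le_sqrt_one_add_sq z
  have hX_le_abs : X ≤ √2 * |x| := by
    rw [← Real.sqrt_sq_eq_abs, ← Real.sqrt_mul zero_le_two]
    exact Real.sqrt_le_sqrt (by nlinarith [sq_abs x])
  have hX_le_mul : X ≤ 2 * (Y * Z) := by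
    have hYZ : X ≤ Y + Z := by
      refine Real.sqrt_le_iff.mpr ⟨by positivity, ?_⟩
      have hyz : y * z ≤ Y * Z := (le_abs_self _).trans <| by
        rw [abs_mul]
        exact mul_le_mul (abs_le_sqrt_one_add_sq y) (abs_le_sqrt_one_add_sq z) (abs_nonneg _)
          (by positivity)
      have hY2 : Y ^ 2 = 1 + y ^ 2 := Real.sq_sqrt (by positivity)
      have hZ2 : Z ^ 2 = 1 + z ^ 2 := Real.sq_sqrt (by positivity)
      subst hxyz
      nlinarith
    nlinarith
  have hXr : X ^ r = X * X ^ (r - 1) := by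
    rw [← Real.rpow_one_add' (by positivity) (by linarith), add_sub_cancel]
  have hrpow : ∀ W : ℝ, 0 < W → W ^ (r - 1) * W = W ^ r := fun W hW => by
    rw [Real.rpow_sub_one hW.ne', div_mul_cancel₀ _ hW.ne']
  calc X ^ r * (|y| * |z|)
      ≤ (√2 * |x|) * (2 * (Y * Z)) ^ (r - 1) * (Y * Z) := by
        rw [hXr]
        gcongr
        · exact abs_le_sqrt_one_add_sq y
        · exact abs_le_sqrt_one_add_sq z
    _ = √2 * 2 ^ (r - 1) * |x| * ((Y ^ (r - 1) * Y) * (Z ^ (r - 1) * Z)) := by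
        rw [Real.mul_rpow zero_le_two (by positivity),
          Real.mul_rpow (by positivity) (by positivity)]
        ring
    _ = √2 * 2 ^ (r - 1) * |x| * (Y ^ r * Z ^ r) := by
        rw [hrpow Y (by positivity), hrpow Z (by positivity)]

lemma summable_and_tsum_mul_sub_le {a b : ℤ → ℝ} (ha : ∀ k, 0 ≤ a k) (hb : ∀ k, 0 ≤ b k)
    (ha2 : Summable fun k => a k ^ 2) (hb2 : Summable fun k => b k ^ 2) (k : ℤ) :
    (Summable fun p => a p * b (k - p)) ∧
      ∑' p, a p * b (k - p) ≤ √(∑' p, a p ^ 2) * √(∑' p, b p ^ 2) := by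
  have hb2' : Summable fun p => b (k - p) ^ 2 :=
    (Equiv.subLeft k).summable_iff.mpr hb2
  have key := Real.summable_and_inner_le_Lp_mul_Lq_tsum_of_nonneg Real.HolderConjugate.two_two
    ha (fun p => hb (k - p)) (by simpa only [Real.rpow_two] using ha2)
    (by simpa only [Real.rpow_two] using hb2')
  simp only [Real.rpow_two, ← Real.sqrt_eq_rpow] at key
  have hshift : ∑' p, b (k - p) ^ 2 = ∑' p, b p ^ 2 :=
    (Equiv.subLeft k).tsum_eq fun p => b p ^ 2
  exact ⟨key.1, hshift ▸ key.2⟩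

lemma summable_inv_int_sq : Summable fun k : ℤ => ((k : ℝ) ^ 2)⁻¹ := by
  simpa only [one_div] using Real.summable_one_div_int_pow.mpr one_lt_two

lemma fc_mulOp_mul_mulOp {m n : ℤ → ℂ} {f g : 𝕋 → ℂ}
    (hf : Summable fun k => ‖m k * fc f k‖) (hg : Summable fun k => ‖n k * fc g k‖) :
    fc (mulOp m f * mulOp n g) = seqConv (fun k => m k * fc f k) (fun k => n k * fc g k) := by
  have hprod : mulOp m f * mulOp n g = fun x => ∑' j,
      seqConv (fun k => m k * fc f k) (fun k => n k * fc g k) j * fourier j x :=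
    funext (tsum_fourier_mul_tsum_fourier hf hg)
  rw [hprod]
  exact funext (fc_tsum_fourier (summable_norm_seqConv hf hg))

def bracketWeight (r : ℝ) (u : ℤ → ℂ) (k : ℤ) : ℝ := √(1 + (k : ℝ) ^ 2) ^ r * ‖u k‖

lemma bracketWeight_nonneg (r : ℝ) (u : ℤ → ℂ) (k : ℤ) : 0 ≤ bracketWeight r u k := by
  unfold bracketWeight
  positivity

lemma bracketWeight_sq (r : ℝ) (u : ℤ → ℂ) (k : ℤ) :
    bracketWeight r u k ^ 2 = (1 + (k : ℝ) ^ 2) ^ r * ‖u k‖ ^ 2 := by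
  rw [bracketWeight, mul_pow, sqrt_rpow_sq (by positivity)]

lemma seqNorm_eq_sqrt_tsum_bracketWeight_sq (r : ℝ) (u : ℤ → ℂ) :
    seqNorm r u = √(∑' k, bracketWeight r u k ^ 2) := by
  simp only [seqNorm, seqNormSq, bracketWeight_sq]

section SequenceEstimate

variable {r : ℝ} {u v : ℤ → ℂ}

lemma sqrt_rpow_mul_norm_seqConv_le (hr : 1 ≤ r)
    (hu : Summable fun k : ℤ => (1 + (k : ℝ) ^ 2) ^ r * ‖u k‖ ^ 2)
    (hv : Summable fun k : ℤ => (1 + (k : ℝ) ^ 2) ^ r * ‖v k‖ ^ 2) {k : ℤ} (hk : k ≠ 0) :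
    √(1 + (k : ℝ) ^ 2) ^ r
        * ‖seqConv (fun p => absDSymbol 1 p * u p) (fun p => absDSymbol 1 p * v p) k‖
      ≤ √2 * 2 ^ (r - 1) * |(k : ℝ)| * (seqNorm r u * seqNorm r v) := by
  set a := bracketWeight r u
  set b := bracketWeight r v
  obtain ⟨hab, hCS⟩ := summable_and_tsum_mul_sub_le (bracketWeight_nonneg r u)
    (bracketWeight_nonneg r v) (by simpa only [a, bracketWeight_sq] using hu)
    (by simpa only [b, bracketWeight_sq] using hv) k
  set t : ℤ → ℝ := fun p => (|(p : ℝ)| * ‖u p‖) * (|((k - p : ℤ) : ℝ)| * ‖v (k - p)‖)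
  have hnorm : ∀ p, ‖absDSymbol 1 p * u p * (absDSymbol 1 (k - p) * v (k - p))‖ = t p :=
    fun p => by simp only [t, norm_mul, norm_absDSymbol_one]
  have ht : Summable t := by
    refine .of_nonneg_of_le (fun p => by positivity) (fun p => ?_) hab
    exact mul_le_mul
      (mul_le_mul_of_nonneg_right (abs_le_sqrt_one_add_sq_rpow hr _) (norm_nonneg _))
      (mul_le_mul_of_nonneg_right (abs_le_sqrt_one_add_sq_rpow hr _) (norm_nonneg _))
      (by positivity) (bracketWeight_nonneg r u p)
  have hkernel : ∀ p, √(1 + (k : ℝ) ^ 2) ^ r * t p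
      ≤ √2 * 2 ^ (r - 1) * |(k : ℝ)| * (a p * b (k - p)) := fun p => by
    have hk1 : 1 ≤ |(k : ℝ)| := by
      rw [← Int.cast_abs]
      exact_mod_cast Int.one_le_abs hk
    have hweight := sqrt_one_add_sq_rpow_mul_le hr hk1 (y := p) (z := ((k - p : ℤ) : ℝ))
      (by push_cast; ring)
    calc √(1 + (k : ℝ) ^ 2) ^ r * t p
        = √(1 + (k : ℝ) ^ 2) ^ r * (|(p : ℝ)| * |((k - p : ℤ) : ℝ)|)
            * (‖u p‖ * ‖v (k - p)‖) := by
          ring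
      _ ≤ √2 * 2 ^ (r - 1) * |(k : ℝ)| * (√(1 + (p : ℝ) ^ 2) ^ r
            * √(1 + ((k - p : ℤ) : ℝ) ^ 2) ^ r) * (‖u p‖ * ‖v (k - p)‖) :=
          mul_le_mul_of_nonneg_right hweight (by positivity)
      _ = √2 * 2 ^ (r - 1) * |(k : ℝ)| * (a p * b (k - p)) := by
          simp only [a, b, bracketWeight]
          ring
  calc √(1 + (k : ℝ) ^ 2) ^ r
        * ‖seqConv (fun p => absDSymbol 1 p * u p) (fun p => absDSymbol 1 p * v p) k‖
      ≤ √(1 + (k : ℝ) ^ 2) ^ r * ∑' p, t p := by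
        gcongr
        exact (norm_tsum_le_tsum_norm (by simpa only [hnorm] using ht)).trans_eq
          (tsum_congr hnorm)
    _ = ∑' p, √(1 + (k : ℝ) ^ 2) ^ r * t p := tsum_mul_left.symm
    _ ≤ ∑' p, √2 * 2 ^ (r - 1) * |(k : ℝ)| * (a p * b (k - p)) :=
        Summable.tsum_le_tsum hkernel (ht.mul_left _) (hab.mul_left _)
    _ = √2 * 2 ^ (r - 1) * |(k : ℝ)| * ∑' p, a p * b (k - p) := tsum_mul_left
    _ ≤ √2 * 2 ^ (r - 1) * |(k : ℝ)| * (seqNorm r u * seqNorm r v) := by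
        rw [seqNorm_eq_sqrt_tsum_bracketWeight_sq, seqNorm_eq_sqrt_tsum_bracketWeight_sq]
        exact mul_le_mul_of_nonneg_left hCS (by positivity)

lemma seqNorm_absDSymbol_mul_seqConv_le (hr : 1 ≤ r)
    (hu : Summable fun k : ℤ => (1 + (k : ℝ) ^ 2) ^ r * ‖u k‖ ^ 2)
    (hv : Summable fun k : ℤ => (1 + (k : ℝ) ^ 2) ^ r * ‖v k‖ ^ 2) :
    seqNorm r (fun k => absDSymbol (-2) k
        * seqConv (fun p => absDSymbol 1 p * u p) (fun p => absDSymbol 1 p * v p) k)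
      ≤ √2 * 2 ^ (r - 1) * √(∑' k : ℤ, ((k : ℝ) ^ 2)⁻¹) * seqNorm r u * seqNorm r v := by
  set M := √2 * 2 ^ (r - 1) * (seqNorm r u * seqNorm r v)
  have hM : 0 ≤ M := by unfold M seqNorm; positivity
  have hpoint : ∀ k : ℤ, (1 + (k : ℝ) ^ 2) ^ r * ‖absDSymbol (-2) k
        * seqConv (fun p => absDSymbol 1 p * u p) (fun p => absDSymbol 1 p * v p) k‖ ^ 2
      ≤ M ^ 2 * ((k : ℝ) ^ 2)⁻¹ := fun k => by
    rcases eq_or_ne k 0 with rfl | hk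
    · simp [absDSymbol]
    calc (1 + (k : ℝ) ^ 2) ^ r * ‖absDSymbol (-2) k
          * seqConv (fun p => absDSymbol 1 p * u p) (fun p => absDSymbol 1 p * v p) k‖ ^ 2
        = (√(1 + (k : ℝ) ^ 2) ^ r * ‖seqConv (fun p => absDSymbol 1 p * u p)
            (fun p => absDSymbol 1 p * v p) k‖) ^ 2 * (((k : ℝ) ^ 2)⁻¹) ^ 2 := by
          rw [norm_mul, norm_absDSymbol_neg_two, mul_pow, mul_pow, sqrt_rpow_sq (by positivity)]
          ring
      _ ≤ (√2 * 2 ^ (r - 1) * |(k : ℝ)| * (seqNorm r u * seqNorm r v)) ^ 2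
            * (((k : ℝ) ^ 2)⁻¹) ^ 2 := by
          gcongr ?_ ^ 2 * _
          exact sqrt_rpow_mul_norm_seqConv_le hr hu hv hk
      _ = M ^ 2 * ((k : ℝ) ^ 2)⁻¹ := by
          simp only [M, mul_pow, sq_abs]
          field_simp
  have hle : seqNormSq r (fun k => absDSymbol (-2) k
      * seqConv (fun p => absDSymbol 1 p * u p) (fun p => absDSymbol 1 p * v p) k)
      ≤ M ^ 2 * ∑' k : ℤ, ((k : ℝ) ^ 2)⁻¹ := by
    rw [← tsum_mul_left]
    exact Summable.tsum_le_tsum hpoint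
      (.of_nonneg_of_le (fun _ => by positivity) hpoint (summable_inv_int_sq.mul_left _))
      (summable_inv_int_sq.mul_left _)
  calc seqNorm r _ ≤ √(M ^ 2 * ∑' k : ℤ, ((k : ℝ) ^ 2)⁻¹) := Real.sqrt_le_sqrt hle
    _ = _ := by
      rw [Real.sqrt_mul (sq_nonneg M), Real.sqrt_sq hM]
      ring

end SequenceEstimate

theorem stmt9 (r : ℝ) (hr : 1 ≤ r) :
    ∃ C > (0:ℝ), ∀ f g : 𝕋 → ℂ, MemH r f → MemH r g →
      sNorm r (absD (-2) ((absD 1 g) * (absD 1 f))) ≤ C * sNorm r f * sNorm r g := by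
  have hS : 0 < ∑' k : ℤ, ((k : ℝ) ^ 2)⁻¹ :=
    summable_inv_int_sq.tsum_pos (fun _ => by positivity) 1 (by norm_num)
  refine ⟨√2 * 2 ^ (r - 1) * √(∑' k : ℤ, ((k : ℝ) ^ 2)⁻¹), by positivity, fun f g hf hg => ?_⟩
  by_cases hsum : (Summable fun k => ‖absDSymbol 1 k * fc g k‖)
      ∧ Summable fun k => ‖absDSymbol 1 k * fc f k‖
  · calc sNorm r (absD (-2) (absD 1 g * absD 1 f))
        ≤ seqNorm r (fun k => absDSymbol (-2) k * fc (absD 1 g * absD 1 f) k) :=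
          sNorm_mulOp_le r _ _
      _ ≤ √2 * 2 ^ (r - 1) * √(∑' k : ℤ, ((k : ℝ) ^ 2)⁻¹) * sNorm r g * sNorm r f := by
          rw [absD_eq_mulOp, fc_mulOp_mul_mulOp hsum.1 hsum.2]
          exact seqNorm_absDSymbol_mul_seqConv_le hr hg.2 hf.2
      _ = _ := mul_right_comm _ _ _
  · have hzero : absD 1 g * absD 1 f = 0 := by
      rcases not_and_or.mp hsum with h | h
      · rw [absD_eq_mulOp 1, mulOp_eq_zero_of_not_summable h, zero_mul]
      · rw [absD_eq_mulOp 1, mulOp_eq_zero_of_not_summable h, mul_zero]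
    rw [hzero, absD_eq_mulOp, mulOp_zero, sNorm_zero]
    unfold sNorm
    positivity
end
end

section
/- Let β ∈ [1/3, 1/2] and r > 3/2 − β. There exists C = C(r, β) > 0 such that for all τ > 0 and all f ∈ H^{r+2β}(𝕋): ‖P₁^τ(f)‖_r ≤ C τ² ‖f‖_{r+2β}². -/
open MeasureTheory Complex

noncomputable section

local notation "𝕋" => AddCircle (2 * Real.pi)

/-!
Write `k₂ = k - k₁`, `⟨j⟩ = (1 + j²)^{1/2}`, `σ = r + 2β` and `γ = min(2β, r + 4β - 2)`, so that
`γ > 1/2`. Since `|e^{ix} - 1| ≤ min(|x|, 2)`, the time integral in `P₁^τ` is `O(τ² min(k₂², |k k₁|))`.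
An elementary case analysis on the triangle `|k| ≤ |k₁| + |k₂|`, `|k₁| ≤ |k| + |k₂|` then gives
`k₁²/k² · min(k₂², |k k₁|) ≲ ⟨k⟩^{-γ-r} ⟨k₁⟩^σ ⟨k₂⟩^σ`. The remaining convolution of `⟨j⟩^σ |f̂_{-j}|`
with itself is at most `‖f‖_σ²` (AM-GM termwise), so `|P₁^τ(f)̂_k| ≲ τ² ⟨k⟩^{-γ-r} ‖f‖_σ²`, and the
`H^r` norm is finite because `∑ ⟨k⟩^{-2γ} < ∞`.
-/

lemma norm_exp_I_mul_ofReal_sub_one_le_two (x : ℝ) : ‖exp (I * x) - 1‖ ≤ 2 := by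
  calc ‖exp (I * x) - 1‖ ≤ ‖exp (I * x)‖ + ‖(1 : ℂ)‖ := norm_sub_le _ _
    _ = 2 := by rw [norm_exp_I_mul_ofReal, norm_one]; norm_num

lemma norm_exp_sub_one_mul_exp_sub_one_le (x y : ℝ) :
    ‖(exp (I * x) - 1) * (exp (I * y) - 1)‖ ≤ 2 * min |x| |y| := by
  rw [norm_mul, mul_min_of_nonneg _ _ zero_le_two]
  have hx := Real.norm_exp_I_mul_ofReal_sub_one_le (x := x)
  have hy := Real.norm_exp_I_mul_ofReal_sub_one_le (x := y)
  rw [Real.norm_eq_abs] at hx hy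
  refine le_min ?_ ?_
  · nlinarith [norm_exp_I_mul_ofReal_sub_one_le_two y, norm_nonneg (exp (I * x) - 1)]
  · nlinarith [norm_exp_I_mul_ofReal_sub_one_le_two x, norm_nonneg (exp (I * y) - 1)]

/-- Each factor vanishes to first order at `s = 0`, while the other stays bounded. -/
lemma norm_integral_exp_sub_one_mul_exp_sub_one_le (p q : ℝ) {τ : ℝ} (hτ : 0 ≤ τ) :
    ‖∫ s in (0 : ℝ)..τ, (exp (I * (p * s : ℝ)) - 1) * (exp (I * (q * s : ℝ)) - 1)‖
      ≤ min |p| |q| * τ ^ 2 := by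
  have hbound : ∀ᵐ s ∂volume.restrict (Set.uIoc 0 τ),
      ‖(exp (I * (p * s : ℝ)) - 1) * (exp (I * (q * s : ℝ)) - 1)‖ ≤ 2 * min |p| |q| * s := by
    refine ae_restrict_of_forall_mem measurableSet_uIoc fun s hs => ?_
    rw [Set.uIoc_of_le hτ] at hs
    have h := norm_exp_sub_one_mul_exp_sub_one_le (p * s) (q * s)
    rwa [abs_mul, abs_mul, abs_of_pos hs.1, ← min_mul_of_nonneg _ _ hs.1.le, ← mul_assoc] at h
  refine (intervalIntegral.norm_integral_le_abs_of_norm_le hbound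
    ((continuous_const.mul continuous_id).intervalIntegrable _ _)).trans_eq ?_
  rw [intervalIntegral.integral_const_mul, integral_id, zero_pow two_ne_zero, sub_zero,
    abs_of_nonneg (by positivity)]
  ring

lemma norm_P1_integral_le (k k₁ : ℤ) {τ : ℝ} (hτ : 0 ≤ τ) :
    ‖∫ s in (0 : ℝ)..τ, (exp (-(2 * I * s * ((k - k₁ : ℤ) : ℂ) ^ 2)) - 1) *
        (exp (-(2 * I * s * (k : ℂ) * (k₁ : ℂ))) - 1)‖
      ≤ 2 * min (((k - k₁ : ℤ) : ℝ) ^ 2) |(k : ℝ) * k₁| * τ ^ 2 := by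
  have h := norm_integral_exp_sub_one_mul_exp_sub_one_le
    (-(2 * ((k - k₁ : ℤ) : ℝ) ^ 2)) (-(2 * ((k : ℝ) * k₁))) hτ
  rw [abs_neg, abs_neg, abs_mul (2 : ℝ), abs_mul (2 : ℝ), abs_two, abs_sq,
    ← mul_min_of_nonneg _ _ zero_le_two] at h
  convert h using 5 with s
  · push_cast; ring_nf
  · push_cast; ring_nf

lemma Real.rpow_mul_rpow_of_add_eq {x y z w : ℝ} (hx : 0 < x) (h : y + z = w) :
    x ^ y * x ^ z = x ^ w := by
  rw [← Real.rpow_add hx, h]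

lemma Real.pow_mul_rpow_of_add_eq {x y z : ℝ} {n : ℕ} (hx : 0 < x) (h : n + y = z) :
    x ^ n * x ^ y = x ^ z := by
  rw [← Real.rpow_natCast, Real.rpow_mul_rpow_of_add_eq hx h]

lemma Real.rpow_mul_rpow_of_add_eq_natCast {x y z : ℝ} {n : ℕ} (hx : 0 < x) (h : y + z = n) :
    x ^ y * x ^ z = x ^ n := by
  rw [Real.rpow_mul_rpow_of_add_eq hx h, Real.rpow_natCast]

section TriangleWeight

variable {σ ρ a b c : ℝ}

lemma rpow_mul_sq_mul_sq_le (hσ : 1 ≤ σ) (hρσ : ρ ≤ σ) (hρ : ρ ≤ 2 * σ - 2)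
    (hb : 1 ≤ b) (hc : 1 ≤ c) (hca : c ≤ a) (hab : a ≤ b + c) (hba : b ≤ a + c) :
    a ^ ρ * (b ^ 2 * c ^ 2) ≤ 2 ^ σ * (a ^ 2 * (b ^ σ * c ^ σ)) := by
  have ha : 1 ≤ a := hc.trans hca
  have ha0 : 0 < a := by linarith
  have hb0 : 0 < b := by linarith
  have hc0 : 0 < c := by linarith
  rcases le_total 2 σ with h2σ | hσ2
  · have habc : a ≤ 2 * (b * c) := by nlinarith
    calc a ^ ρ * (b ^ 2 * c ^ 2) ≤ a ^ σ * (b ^ 2 * c ^ 2) := by gcongr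
      _ = a ^ 2 * a ^ (σ - 2) * (b ^ 2 * c ^ 2) := by
          rw [Real.pow_mul_rpow_of_add_eq ha0 (by push_cast; ring)]
      _ ≤ a ^ 2 * (2 * (b * c)) ^ (σ - 2) * (b ^ 2 * c ^ 2) := by
          gcongr
      _ = 2 ^ (σ - 2) * (a ^ 2 * ((b ^ 2 * b ^ (σ - 2)) * (c ^ 2 * c ^ (σ - 2)))) := by
          rw [Real.mul_rpow zero_le_two (by positivity), Real.mul_rpow hb0.le hc0.le]; ring
      _ ≤ 2 ^ σ * (a ^ 2 * (b ^ σ * c ^ σ)) := by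
          rw [Real.pow_mul_rpow_of_add_eq hb0 (by push_cast; ring),
            Real.pow_mul_rpow_of_add_eq hc0 (by push_cast; ring)]
          gcongr <;> linarith
  · have hb2a : b ≤ 2 * a := by linarith
    calc a ^ ρ * (b ^ 2 * c ^ 2)
        = a ^ ρ * (b ^ (2 - σ) * c ^ (2 - σ)) * (b ^ σ * c ^ σ) := by
          rw [← Real.rpow_mul_rpow_of_add_eq_natCast hb0 (y := 2 - σ) (z := σ) (by push_cast; ring),
            ← Real.rpow_mul_rpow_of_add_eq_natCast hc0 (y := 2 - σ) (z := σ) (by push_cast; ring)]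
          ring
      _ ≤ a ^ (2 * σ - 2) * ((2 * a) ^ (2 - σ) * a ^ (2 - σ)) * (b ^ σ * c ^ σ) := by
          gcongr
      _ = 2 ^ (2 - σ) * ((a ^ (2 * σ - 2) * a ^ (2 - σ)) * a ^ (2 - σ)) * (b ^ σ * c ^ σ) := by
          rw [Real.mul_rpow zero_le_two ha0.le]; ring
      _ = 2 ^ (2 - σ) * (a ^ 2 * (b ^ σ * c ^ σ)) := by
          rw [Real.rpow_mul_rpow_of_add_eq ha0 (w := σ) (by ring),
            Real.rpow_mul_rpow_of_add_eq_natCast ha0 (n := 2) (by push_cast; ring)]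
          ring
      _ ≤ 2 ^ σ * (a ^ 2 * (b ^ σ * c ^ σ)) := by
          gcongr <;> linarith

lemma rpow_mul_sq_mul_mul_le (hσ : 3 / 2 ≤ σ) (hρσ : ρ ≤ σ) (hρ : ρ ≤ 2 * σ - 2)
    (ha : 1 ≤ a) (hb : 1 ≤ b) (hac : a ≤ c) (hba : b ≤ a + c) :
    a ^ ρ * (b ^ 2 * (a * b)) ≤ 2 ^ σ * (a ^ 2 * (b ^ σ * c ^ σ)) := by
  have ha0 : 0 < a := by linarith
  have hb0 : 0 < b := by linarith
  have hc0 : 0 < c := by linarith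
  have hsplit : a ^ ρ * (b ^ 2 * (a * b)) = a ^ 2 * a ^ (ρ - 1) * b ^ 3 := by
    rw [Real.pow_mul_rpow_of_add_eq ha0 (z := ρ + 1) (by push_cast; ring),
      Real.rpow_add_one ha0.ne']
    ring
  rw [hsplit]
  rcases le_total σ 3 with hσ3 | h3σ
  · have hb2c : b ≤ 2 * c := by linarith
    calc a ^ 2 * a ^ (ρ - 1) * b ^ 3 = a ^ 2 * a ^ (ρ - 1) * (b ^ (3 - σ) * b ^ σ) := by
          rw [Real.rpow_mul_rpow_of_add_eq_natCast hb0 (n := 3) (by push_cast; ring)]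
      _ ≤ a ^ 2 * a ^ (2 * σ - 3) * ((2 * c) ^ (3 - σ) * b ^ σ) := by
          gcongr (a ^ 2 * ?_ * (?_ * b ^ σ))
          · exact Real.rpow_le_rpow_of_exponent_le ha (by linarith)
          · exact Real.rpow_le_rpow hb0.le hb2c (by linarith)
      _ ≤ a ^ 2 * c ^ (2 * σ - 3) * ((2 * c) ^ (3 - σ) * b ^ σ) := by
          gcongr; linarith
      _ = 2 ^ (3 - σ) * (a ^ 2 * (b ^ σ * (c ^ (2 * σ - 3) * c ^ (3 - σ)))) := by
          rw [Real.mul_rpow zero_le_two hc0.le]; ring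
      _ ≤ 2 ^ σ * (a ^ 2 * (b ^ σ * c ^ σ)) := by
          rw [Real.rpow_mul_rpow_of_add_eq hc0 (by ring)]
          gcongr <;> linarith
  · calc a ^ 2 * a ^ (ρ - 1) * b ^ 3 ≤ a ^ 2 * c ^ σ * b ^ σ := by
          gcongr
          · exact (Real.rpow_le_rpow_of_exponent_le ha (by linarith)).trans
              (Real.rpow_le_rpow ha0.le hac (by linarith))
          · exact_mod_cast Real.rpow_le_rpow_of_exponent_le hb h3σ
      _ ≤ 2 ^ σ * (a ^ 2 * (b ^ σ * c ^ σ)) := by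
          rw [mul_assoc, mul_comm (c ^ σ)]
          exact le_mul_of_one_le_left (by positivity) (Real.one_le_rpow one_le_two (by linarith))

lemma rpow_mul_sq_mul_min_le (hσ : 3 / 2 ≤ σ) (hρσ : ρ ≤ σ) (hρ : ρ ≤ 2 * σ - 2)
    (ha : 1 ≤ a) (hb : 1 ≤ b) (hc : 1 ≤ c) (hab : a ≤ b + c) (hba : b ≤ a + c) :
    a ^ ρ * (b ^ 2 * min (c ^ 2) (a * b)) ≤ 2 ^ σ * (a ^ 2 * (b ^ σ * c ^ σ)) := by
  have hpos : 0 ≤ a ^ ρ * b ^ 2 := by positivity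
  rcases le_total c a with hca | hac
  · calc a ^ ρ * (b ^ 2 * min (c ^ 2) (a * b)) ≤ a ^ ρ * (b ^ 2 * c ^ 2) := by
          rw [← mul_assoc, ← mul_assoc]; exact mul_le_mul_of_nonneg_left (min_le_left _ _) hpos
      _ ≤ _ := rpow_mul_sq_mul_sq_le (by linarith) hρσ hρ hb hc hca hab hba
  · calc a ^ ρ * (b ^ 2 * min (c ^ 2) (a * b)) ≤ a ^ ρ * (b ^ 2 * (a * b)) := by
          rw [← mul_assoc, ← mul_assoc]; exact mul_le_mul_of_nonneg_left (min_le_right _ _) hpos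
      _ ≤ _ := rpow_mul_sq_mul_mul_le hσ hρσ hρ ha hb hac hba

end TriangleWeight

lemma sq_rpow_half (x t : ℝ) : (x ^ 2) ^ (t / 2) = |x| ^ t := by
  rw [← sq_abs, ← Real.rpow_natCast, ← Real.rpow_mul (abs_nonneg x)]
  congr 1
  push_cast
  ring

lemma abs_rpow_le_one_add_sq_rpow (x : ℝ) {t : ℝ} (ht : 0 ≤ t) :
    |x| ^ t ≤ (1 + x ^ 2) ^ (t / 2) := by
  rw [← sq_rpow_half]
  exact Real.rpow_le_rpow (sq_nonneg x) (by linarith) (by positivity)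

lemma one_add_sq_rpow_le {x : ℝ} (hx : 1 ≤ |x|) {t : ℝ} (ht : 0 ≤ t) :
    (1 + x ^ 2) ^ (t / 2) ≤ 2 ^ (t / 2) * |x| ^ t := by
  have hx2 : 1 ≤ x ^ 2 := by nlinarith [sq_abs x]
  calc (1 + x ^ 2) ^ (t / 2) ≤ (2 * x ^ 2) ^ (t / 2) :=
        Real.rpow_le_rpow (by positivity) (by linarith) (by positivity)
    _ = 2 ^ (t / 2) * |x| ^ t := by rw [Real.mul_rpow zero_le_two (sq_nonneg x), sq_rpow_half]

lemma P1_multiplier_le {σ ρ : ℝ} (hσ : 3 / 2 ≤ σ) (hρ0 : 0 ≤ ρ) (hρσ : ρ ≤ σ)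
    (hρ : ρ ≤ 2 * σ - 2) {k : ℤ} (hk : k ≠ 0) (k₁ : ℤ) :
    (k₁ : ℝ) ^ 2 / (k : ℝ) ^ 2 * min (((k - k₁ : ℤ) : ℝ) ^ 2) |(k : ℝ) * k₁|
      ≤ 2 ^ σ * 2 ^ (ρ / 2) * (((1 + (k₁ : ℝ) ^ 2) ^ (σ / 2) *
          (1 + ((k - k₁ : ℤ) : ℝ) ^ 2) ^ (σ / 2)) / (1 + (k : ℝ) ^ 2) ^ (ρ / 2)) := by
  have hrhs : 0 ≤ 2 ^ σ * 2 ^ (ρ / 2) * (((1 + (k₁ : ℝ) ^ 2) ^ (σ / 2) *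
      (1 + ((k - k₁ : ℤ) : ℝ) ^ 2) ^ (σ / 2)) / (1 + (k : ℝ) ^ 2) ^ (ρ / 2)) := by positivity
  rcases eq_or_ne k₁ 0 with rfl | hk₁
  · exact (Eq.le (by simp)).trans hrhs
  rcases eq_or_ne (k - k₁) 0 with hk₂ | hk₂
  · refine (Eq.le ?_).trans hrhs
    rw [hk₂, Int.cast_zero, zero_pow two_ne_zero, min_eq_left (abs_nonneg _), mul_zero]
  have one_le_abs_cast : ∀ j : ℤ, j ≠ 0 → (1 : ℝ) ≤ |(j : ℝ)| := fun j hj => by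
    exact_mod_cast Int.one_le_abs hj
  have hab : |(k : ℝ)| ≤ |(k₁ : ℝ)| + |((k - k₁ : ℤ) : ℝ)| := by
    simpa using abs_add_le (k₁ : ℝ) ((k : ℝ) - k₁)
  have hba : |(k₁ : ℝ)| ≤ |(k : ℝ)| + |((k - k₁ : ℤ) : ℝ)| := by
    have := abs_sub_abs_le_abs_sub (k₁ : ℝ) k
    rw [abs_sub_comm] at this
    push_cast
    linarith
  have hmain := rpow_mul_sq_mul_min_le hσ hρσ hρ (one_le_abs_cast k hk) (one_le_abs_cast k₁ hk₁)
    (one_le_abs_cast _ hk₂) hab hba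
  have hk0 : 0 < |(k : ℝ)| := by positivity
  have hσ0 : 0 ≤ σ := by linarith
  calc (k₁ : ℝ) ^ 2 / (k : ℝ) ^ 2 * min (((k - k₁ : ℤ) : ℝ) ^ 2) |(k : ℝ) * k₁|
      = |(k₁ : ℝ)| ^ 2 * min (|((k - k₁ : ℤ) : ℝ)| ^ 2) (|(k : ℝ)| * |(k₁ : ℝ)|)
          / |(k : ℝ)| ^ 2 := by
        rw [sq_abs, sq_abs, sq_abs, abs_mul]; ring
    _ ≤ 2 ^ σ * (|(k₁ : ℝ)| ^ σ * |((k - k₁ : ℤ) : ℝ)| ^ σ) / |(k : ℝ)| ^ ρ := by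
        rw [div_le_div_iff₀ (by positivity) (by positivity)]
        linarith
    _ ≤ 2 ^ σ * ((1 + (k₁ : ℝ) ^ 2) ^ (σ / 2) * (1 + ((k - k₁ : ℤ) : ℝ) ^ 2) ^ (σ / 2))
          / ((1 + (k : ℝ) ^ 2) ^ (ρ / 2) / 2 ^ (ρ / 2)) := by
        gcongr
        · exact abs_rpow_le_one_add_sq_rpow _ hσ0
        · exact abs_rpow_le_one_add_sq_rpow _ hσ0
        · rw [div_le_iff₀' (by positivity)]
          exact one_add_sq_rpow_le (one_le_abs_cast k hk) hρ0
    _ = _ := by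
        field_simp

lemma fc_cconj (f : 𝕋 → ℂ) (k : ℤ) : fc (cconj f) k = starRingEnd ℂ (fc f (-k)) := by
  unfold fc cconj fourierCoeff
  rw [← integral_conj]
  congr 1
  funext t
  rw [smul_eq_mul, smul_eq_mul, map_mul, neg_neg, ← fourier_neg]

lemma norm_fc_cconj (f : 𝕋 → ℂ) (k : ℤ) : ‖fc (cconj f) k‖ = ‖fc f (-k)‖ := by
  rw [fc_cconj, RCLike.norm_conj]

lemma norm_mul_sub_le (b : ℤ → ℝ) (k j : ℤ) :
    ‖b j * b (k - j)‖ ≤ (b j ^ 2 + b (k - j) ^ 2) / 2 := by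
  rw [Real.norm_eq_abs, abs_mul]
  nlinarith [sq_nonneg (|b j| - |b (k - j)|), sq_abs (b j), sq_abs (b (k - j))]

section Convolution

variable {b : ℤ → ℝ}

lemma summable_sq_sub (hb : Summable fun j => b j ^ 2) (k : ℤ) :
    Summable fun j => b (k - j) ^ 2 :=
  (Equiv.subLeft k).summable_iff.mpr hb

lemma summable_mul_sub (hb : Summable fun j => b j ^ 2) (k : ℤ) :
    Summable fun j => b j * b (k - j) :=
  .of_norm_bounded ((hb.add (summable_sq_sub hb k)).div_const 2) (norm_mul_sub_le b k)

lemma tsum_mul_sub_le (hb : Summable fun j => b j ^ 2) (k : ℤ) :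
    ∑' j, b j * b (k - j) ≤ ∑' j, b j ^ 2 := by
  have hsq := summable_sq_sub hb k
  have hshift : ∑' j, b (k - j) ^ 2 = ∑' j, b j ^ 2 := (Equiv.subLeft k).tsum_eq fun j => b j ^ 2
  calc ∑' j, b j * b (k - j) ≤ ∑' j, (b j ^ 2 + b (k - j) ^ 2) / 2 :=
        (summable_mul_sub hb k).tsum_le_tsum
          (fun j => (le_abs_self _).trans (norm_mul_sub_le b k j)) ((hb.add hsq).div_const 2)
    _ = ∑' j, b j ^ 2 := by
        rw [tsum_div_const, hb.tsum_add hsq, hshift]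
        ring

end Convolution

lemma summable_one_add_sq_rpow_neg {γ : ℝ} (hγ : 1 / 2 < γ) :
    Summable fun k : ℤ => (1 + (k : ℝ) ^ 2) ^ (-γ) := by
  refine .of_norm_bounded_eventually (Real.summable_abs_int_rpow (b := 2 * γ) (by linarith)) ?_
  filter_upwards [(Set.finite_singleton (0 : ℤ)).compl_mem_cofinite] with k hk
  have hk0 : 0 < (k : ℝ) ^ 2 := by
    have : (k : ℝ) ≠ 0 := by exact_mod_cast hk
    positivity
  rw [Real.norm_of_nonneg (by positivity), ← sq_rpow_half, neg_div,
    mul_div_cancel_left₀ _ two_ne_zero]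
  exact Real.rpow_le_rpow_of_nonpos hk0 (by linarith) (by linarith)

lemma seqNorm_le_of_norm_le {r γ M : ℝ} (hγ : 1 / 2 < γ) {c : ℤ → ℂ}
    (hc : ∀ k : ℤ, ‖c k‖ ≤ M / (1 + (k : ℝ) ^ 2) ^ ((γ + r) / 2)) :
    seqNorm r c ≤ M * √(∑' k : ℤ, (1 + (k : ℝ) ^ 2) ^ (-γ)) := by
  have hM : 0 ≤ M := by simpa using (norm_nonneg _).trans (hc 0)
  have hterm : ∀ k : ℤ, (1 + (k : ℝ) ^ 2) ^ r * ‖c k‖ ^ 2 ≤ M ^ 2 * (1 + (k : ℝ) ^ 2) ^ (-γ) := by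
    intro k
    have hk : 0 < 1 + (k : ℝ) ^ 2 := by positivity
    calc (1 + (k : ℝ) ^ 2) ^ r * ‖c k‖ ^ 2
        ≤ (1 + (k : ℝ) ^ 2) ^ r * (M / (1 + (k : ℝ) ^ 2) ^ ((γ + r) / 2)) ^ 2 := by
          gcongr; exact hc k
      _ = M ^ 2 * (1 + (k : ℝ) ^ 2) ^ (-γ) := by
          rw [div_pow, ← Real.rpow_natCast ((1 + (k : ℝ) ^ 2) ^ ((γ + r) / 2)) 2,
            ← Real.rpow_mul hk.le,
            show -γ = r - (γ + r) / 2 * ((2 : ℕ) : ℝ) by push_cast; ring, Real.rpow_sub hk]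
          ring
  have hsum := (summable_one_add_sq_rpow_neg hγ).mul_left (M ^ 2)
  calc seqNorm r c ≤ √(∑' k : ℤ, M ^ 2 * (1 + (k : ℝ) ^ 2) ^ (-γ)) :=
        Real.sqrt_le_sqrt <|
          (hsum.of_nonneg_of_le (fun k => by positivity) hterm).tsum_le_tsum hterm hsum
    _ = M * √(∑' k : ℤ, (1 + (k : ℝ) ^ 2) ^ (-γ)) := by
        rw [tsum_mul_left, Real.sqrt_mul (sq_nonneg M), Real.sqrt_sq hM]

def weightedConjCoeff (σ : ℝ) (f : 𝕋 → ℂ) (j : ℤ) : ℝ :=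
  (1 + (j : ℝ) ^ 2) ^ (σ / 2) * ‖fc (cconj f) j‖

section WeightedConjCoeff

variable {σ : ℝ} {f : 𝕋 → ℂ}

lemma weightedConjCoeff_sq_eq (σ : ℝ) (f : 𝕋 → ℂ) :
    (fun j => weightedConjCoeff σ f j ^ 2)
      = (fun k : ℤ => (1 + (k : ℝ) ^ 2) ^ σ * ‖fc f k‖ ^ 2) ∘ Neg.neg := by
  funext j
  rw [Function.comp_apply, weightedConjCoeff, mul_pow, norm_fc_cconj,
    ← Real.rpow_natCast _ 2, ← Real.rpow_mul (by positivity)]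
  push_cast
  ring_nf

lemma MemH.summable_weightedConjCoeff_sq (hf : MemH σ f) :
    Summable fun j => weightedConjCoeff σ f j ^ 2 := by
  rw [weightedConjCoeff_sq_eq]
  exact hf.2.comp_injective neg_injective

lemma tsum_weightedConjCoeff_sq (σ : ℝ) (f : 𝕋 → ℂ) :
    ∑' j, weightedConjCoeff σ f j ^ 2 = sNormSq σ f := by
  rw [weightedConjCoeff_sq_eq, sNormSq]
  exact (Equiv.neg ℤ).tsum_eq fun k : ℤ => (1 + (k : ℝ) ^ 2) ^ σ * ‖fc f k‖ ^ 2

lemma sNormSq_nonneg (σ : ℝ) (f : 𝕋 → ℂ) : 0 ≤ sNormSq σ f := by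
  rw [← tsum_weightedConjCoeff_sq]
  exact tsum_nonneg fun j => sq_nonneg _

end WeightedConjCoeff

section P1Bound

variable {σ ρ τ : ℝ} {f : 𝕋 → ℂ}

lemma norm_P1_term_le (hσ : 3 / 2 ≤ σ) (hρ0 : 0 ≤ ρ) (hρσ : ρ ≤ σ) (hρ : ρ ≤ 2 * σ - 2)
    (hτ : 0 ≤ τ) {k : ℤ} (hk : k ≠ 0) (k₁ : ℤ) :
    ‖((k₁ : ℂ) ^ 2 / (k : ℂ) ^ 2) *
        (∫ s in (0 : ℝ)..τ, (exp (-(2 * I * s * ((k - k₁ : ℤ) : ℂ) ^ 2)) - 1) *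
          (exp (-(2 * I * s * (k : ℂ) * (k₁ : ℂ))) - 1)) *
        fc (cconj f) k₁ * fc (cconj f) (k - k₁)‖
      ≤ 2 * 2 ^ σ * 2 ^ (ρ / 2) * τ ^ 2 / (1 + (k : ℝ) ^ 2) ^ (ρ / 2) *
          (weightedConjCoeff σ f k₁ * weightedConjCoeff σ f (k - k₁)) := by
  have hfrac : ‖(k₁ : ℂ) ^ 2 / (k : ℂ) ^ 2‖ = (k₁ : ℝ) ^ 2 / (k : ℝ) ^ 2 := by
    rw [norm_div, norm_pow, norm_pow, Complex.norm_intCast, Complex.norm_intCast, sq_abs, sq_abs]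
  rw [norm_mul, norm_mul, norm_mul, hfrac]
  calc (k₁ : ℝ) ^ 2 / (k : ℝ) ^ 2 * ‖∫ s in (0 : ℝ)..τ, _‖ *
        ‖fc (cconj f) k₁‖ * ‖fc (cconj f) (k - k₁)‖
      ≤ (k₁ : ℝ) ^ 2 / (k : ℝ) ^ 2 * (2 * min (((k - k₁ : ℤ) : ℝ) ^ 2) |(k : ℝ) * k₁| * τ ^ 2) *
        ‖fc (cconj f) k₁‖ * ‖fc (cconj f) (k - k₁)‖ := by
        gcongr; exact norm_P1_integral_le k k₁ hτ
    _ = 2 * τ ^ 2 * ((k₁ : ℝ) ^ 2 / (k : ℝ) ^ 2 * min (((k - k₁ : ℤ) : ℝ) ^ 2) |(k : ℝ) * k₁|) *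
        (‖fc (cconj f) k₁‖ * ‖fc (cconj f) (k - k₁)‖) := by ring
    _ ≤ 2 * τ ^ 2 * (2 ^ σ * 2 ^ (ρ / 2) * (((1 + (k₁ : ℝ) ^ 2) ^ (σ / 2) *
          (1 + ((k - k₁ : ℤ) : ℝ) ^ 2) ^ (σ / 2)) / (1 + (k : ℝ) ^ 2) ^ (ρ / 2))) *
        (‖fc (cconj f) k₁‖ * ‖fc (cconj f) (k - k₁)‖) := by
        gcongr 2 * τ ^ 2 * ?_ * _
        exact P1_multiplier_le hσ hρ0 hρσ hρ hk k₁
    _ = _ := by unfold weightedConjCoeff; ring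

lemma norm_P1coef_le (hσ : 3 / 2 ≤ σ) (hρ0 : 0 ≤ ρ) (hρσ : ρ ≤ σ) (hρ : ρ ≤ 2 * σ - 2)
    (hτ : 0 ≤ τ) (hf : MemH σ f) (k : ℤ) :
    ‖P1coef τ f k‖
      ≤ 2 * 2 ^ σ * 2 ^ (ρ / 2) * τ ^ 2 * sNormSq σ f / (1 + (k : ℝ) ^ 2) ^ (ρ / 2) := by
  rcases eq_or_ne k 0 with rfl | hk
  · simp only [P1coef, if_true, norm_zero]
    have := sNormSq_nonneg σ f
    positivity
  rw [P1coef, if_neg hk]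
  have hw := hf.summable_weightedConjCoeff_sq
  refine (tsum_of_norm_bounded ((summable_mul_sub hw k).mul_left _).hasSum
    (norm_P1_term_le hσ hρ0 hρσ hρ hτ hk)).trans ?_
  calc ∑' j, 2 * 2 ^ σ * 2 ^ (ρ / 2) * τ ^ 2 / (1 + (k : ℝ) ^ 2) ^ (ρ / 2) *
        (weightedConjCoeff σ f j * weightedConjCoeff σ f (k - j))
      = 2 * 2 ^ σ * 2 ^ (ρ / 2) * τ ^ 2 / (1 + (k : ℝ) ^ 2) ^ (ρ / 2) *
        ∑' j, weightedConjCoeff σ f j * weightedConjCoeff σ f (k - j) := tsum_mul_left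
    _ ≤ 2 * 2 ^ σ * 2 ^ (ρ / 2) * τ ^ 2 / (1 + (k : ℝ) ^ 2) ^ (ρ / 2) * sNormSq σ f := by
        rw [← tsum_weightedConjCoeff_sq]
        exact mul_le_mul_of_nonneg_left (tsum_mul_sub_le hw k) (by positivity)
    _ = _ := by ring

end P1Bound

theorem stmt14_general (β r : ℝ) (hβ1 : 1/3 ≤ β) (hr : 3/2 - β < r) :
    ∃ C > (0:ℝ), ∀ τ : ℝ, 0 < τ → ∀ f : 𝕋 → ℂ, MemH (r + 2*β) f →
      seqNorm r (P1coef τ f) ≤ C * τ^2 * (sNorm (r + 2*β) f)^2 := by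
  set σ := r + 2 * β
  set γ := min (2 * β) (r + 4 * β - 2)
  have hγ : 1 / 2 < γ := lt_min (by linarith) (by linarith)
  have hγ₁ : γ ≤ 2 * β := min_le_left _ _
  have hγ₂ : γ ≤ r + 4 * β - 2 := min_le_right _ _
  have hγr : -r < γ := lt_min (by linarith) (by linarith)
  set S := ∑' k : ℤ, (1 + (k : ℝ) ^ 2) ^ (-γ)
  have hS : 0 < S := (summable_one_add_sq_rpow_neg hγ).tsum_pos (fun _ => by positivity) 0 (by simp)
  refine ⟨2 * 2 ^ σ * 2 ^ ((γ + r) / 2) * √S, by positivity, fun τ hτ f hf => ?_⟩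
  calc seqNorm r (P1coef τ f)
      ≤ 2 * 2 ^ σ * 2 ^ ((γ + r) / 2) * τ ^ 2 * sNormSq σ f * √S :=
        seqNorm_le_of_norm_le hγ
          (norm_P1coef_le (by linarith) (by linarith) (by linarith) (by linarith) hτ.le hf)
    _ = 2 * 2 ^ σ * 2 ^ ((γ + r) / 2) * √S * τ ^ 2 * sNorm σ f ^ 2 := by
        rw [sNorm, Real.sq_sqrt (sNormSq_nonneg σ f)]
        ring

theorem stmt14 (β r : ℝ) (hβ1 : 1/3 ≤ β) (hβ2 : β ≤ 1/2) (hr : 3/2 - β < r) :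
    ∃ C > (0:ℝ), ∀ τ : ℝ, 0 < τ → ∀ f : 𝕋 → ℂ, MemH (r + 2*β) f →
      seqNorm r (P1coef τ f) ≤ C * τ^2 * (sNorm (r + 2*β) f)^2 :=
  stmt14_general β r hβ1 hr
end
end
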